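/- arXiv:2502.07305 — 10 statements merged into one kernel-verified Lean document; each statement's English description precedes it below -/
import Mathlib

section
/- If a is a strongly π-regular element of a ring R with aⁿ = aⁿ⁺¹x for some n ∈ ℕ and x ∈ R, then the element w = aⁿxⁿ⁺¹ satisfies aw = wa and aⁿ = aⁿ⁺¹w. -/
/-!
Left-multiplying `a ^ n = a ^ (n + 1) * x` by powers of `a` and
`a ^ m = y * a ^ (m + 1)` on the right by powers of `a` gives both relations at the common
exponent `N = m + n`, and then `a ^ N * x = y * a ^ (N + 1) * x = y * a ^ N`, so `a ^ N`
semiconjugates `x` to `y`. Writing `a ^ n = a ^ N * x ^ m`, both `a * w` and `w * a`, for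
`w = a ^ n * x ^ (n + 1)`, become `y ^ N * a ^ N`.
-/

namespace StronglyPiRegular

variable {M : Type*} [Monoid M] {a x y : M} {m n : ℕ}

theorem pow_eq_pow_add_mul_pow (hx : a ^ n = a ^ (n + 1) * x) (k : ℕ) :
    a ^ n = a ^ (n + k) * x ^ k := by
  induction k with
  | zero => simp
  | succ k ih =>
    calc a ^ n = a ^ k * a ^ n * x ^ k := by rw [← pow_add, add_comm k, ← ih]
      _ = a ^ (n + (k + 1)) * x ^ (k + 1) := by
        rw [hx, ← mul_assoc, ← pow_add, mul_assoc, ← pow_succ', add_comm k, add_right_comm,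
          ← add_assoc]

theorem pow_add_eq_pow_add_succ_mul (hx : a ^ n = a ^ (n + 1) * x) (m : ℕ) :
    a ^ (m + n) = a ^ (m + n + 1) * x := by
  rw [pow_add, hx, ← mul_assoc, ← pow_add, add_assoc]

theorem pow_add_eq_mul_pow_add_succ (hy : a ^ m = y * a ^ (m + 1)) (n : ℕ) :
    a ^ (m + n) = y * a ^ (m + n + 1) := by
  rw [pow_add, hy, mul_assoc, ← pow_add, add_right_comm]

theorem semiconjBy_pow (hx : a ^ n = a ^ (n + 1) * x) (hy : a ^ n = y * a ^ (n + 1)) :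
    SemiconjBy (a ^ n) x y :=
  calc a ^ n * x = y * (a ^ (n + 1) * x) := by rw [hy, mul_assoc]
    _ = y * a ^ n := by rw [← hx]

theorem mul_pow_mul_pow_succ (hx : a ^ n = a ^ (n + 1) * x) :
    a * (a ^ n * x ^ (n + 1)) = a ^ n * x ^ n := by
  rw [← mul_assoc, ← pow_succ', pow_succ' x, ← mul_assoc, ← hx]

theorem commute_pow_mul_pow_succ (hx : a ^ n = a ^ (n + 1) * x)
    (hy : a ^ m = y * a ^ (m + 1)) : Commute a (a ^ n * x ^ (n + 1)) := by
  set N := m + n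
  have hxN : a ^ N = a ^ (N + 1) * x := pow_add_eq_pow_add_succ_mul hx m
  have hyN : a ^ N = y * a ^ (N + 1) := pow_add_eq_mul_pow_add_succ hy n
  have hconj (k : ℕ) : a ^ N * x ^ k = y ^ k * a ^ N := (semiconjBy_pow hxN hyN).pow_right k
  have han : a ^ n = a ^ N * x ^ m := by
    rw [pow_eq_pow_add_mul_pow hx m, add_comm]
  have haw : a * (a ^ n * x ^ (n + 1)) = y ^ N * a ^ N := by
    rw [mul_pow_mul_pow_succ hx, han, mul_assoc, ← pow_add, hconj]
  have hwa : a ^ n * x ^ (n + 1) * a = y ^ N * a ^ N :=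
    calc a ^ n * x ^ (n + 1) * a = a ^ N * x ^ (N + 1) * a := by
          rw [han, mul_assoc (a ^ N), ← pow_add, add_assoc]
      _ = y ^ N * (y * a ^ (N + 1)) := by
          rw [hconj, mul_assoc, ← pow_succ, pow_succ, mul_assoc]
      _ = y ^ N * a ^ N := by rw [← hyN]
  exact haw.trans hwa.symm

theorem pow_eq_pow_succ_mul_pow_mul_pow_succ (hx : a ^ n = a ^ (n + 1) * x) :
    a ^ n = a ^ (n + 1) * (a ^ n * x ^ (n + 1)) := by
  rw [← mul_assoc, ← pow_add, add_right_comm, add_assoc, ← pow_eq_pow_add_mul_pow hx]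

end StronglyPiRegular

open StronglyPiRegular in
theorem stmt_0_general {R : Type*} [Ring R] (a x : R) (n : ℕ)
    (hx : a ^ n = a ^ (n + 1) * x)
    (hleft : ∃ (m : ℕ) (y : R), 0 < m ∧ a ^ m = y * a ^ (m + 1)) :
    a * (a ^ n * x ^ (n + 1)) = (a ^ n * x ^ (n + 1)) * a ∧
      a ^ n = a ^ (n + 1) * (a ^ n * x ^ (n + 1)) := by
  obtain ⟨m, y, -, hy⟩ := hleft
  exact ⟨commute_pow_mul_pow_succ hx hy, pow_eq_pow_succ_mul_pow_mul_pow_succ hx⟩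

/-- Drazin: if `a` is strongly π-regular in `R` with `a^n = a^(n+1) * x`, then
`w = a^n * x^(n+1)` commutes with `a` and `a^n = a^(n+1) * w`. -/
theorem stmt_0 {R : Type*} [Ring R] (a x : R) (n : ℕ) (hn : 0 < n)
    (hx : a ^ n = a ^ (n + 1) * x)
    (hleft : ∃ (m : ℕ) (y : R), 0 < m ∧ a ^ m = y * a ^ (m + 1)) :
    a * (a ^ n * x ^ (n + 1)) = (a ^ n * x ^ (n + 1)) * a ∧
      a ^ n = a ^ (n + 1) * (a ^ n * x ^ (n + 1)) :=
  stmt_0_general a x n hx hleft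
end

section
/- Let S be a subring of a ring R and a ∈ S with aⁿ = aⁿ⁺¹x for some positive integer n and x ∈ S. If a is strongly π-regular in R, then there exists y ∈ S with aⁿ = yaⁿ⁺¹; in particular a is strongly π-regular in S. -/
/-!
Raise both one-sided equations to a common level `N`: `a^N = a^(N+1) x` and `a^N = y a^(N+1)`.
They force `a^N x = y a^N`, so `a^N x^(N+1)` (a product of elements of `S`) acts on `a^(N+1)` as
`y^(N+1)` does, i.e. `a^N x^(N+1) a^(N+1) = y^(N+1) a^(2N+1) = a^N`. This left equation at level
`N` descends to level `n`, because `a^n = a^N x^(N-n)`.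
-/

theorem pow_mem_of_pos {M S : Type*} [Monoid M] [SetLike S M] [MulMemClass S M] {s : S} {x : M}
    (hx : x ∈ s) {k : ℕ} (hk : 0 < k) : x ^ k ∈ s := by
  induction k, hk using Nat.le_induction with
  | base => simpa using hx
  | succ k _ ih => rw [pow_succ]; exact mul_mem ih hx

section Monoid

variable {M : Type*} [Monoid M] {a x y z : M} {n N : ℕ}

theorem pow_eq_pow_succ_mul_of_le (h : a ^ n = a ^ (n + 1) * x) (hN : n ≤ N) :
    a ^ N = a ^ (N + 1) * x := by
  obtain ⟨k, rfl⟩ := Nat.exists_eq_add_of_le' hN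
  rw [pow_add, h, ← mul_assoc, ← pow_add, add_assoc]

theorem pow_eq_mul_pow_succ_of_le (h : a ^ n = y * a ^ (n + 1)) (hN : n ≤ N) :
    a ^ N = y * a ^ (N + 1) := by
  obtain ⟨k, rfl⟩ := Nat.exists_eq_add_of_le hN
  rw [pow_add, h, mul_assoc, ← pow_add, Nat.add_right_comm]

theorem pow_add_mul_pow_eq (h : a ^ n = a ^ (n + 1) * x) (k : ℕ) : a ^ (n + k) * x ^ k = a ^ n := by
  induction k with
  | zero => simp
  | succ k ih =>
    rw [pow_succ', ← mul_assoc, ← add_assoc, ← pow_eq_pow_succ_mul_of_le h (n.le_add_right k), ih]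

theorem pow_mul_pow_add_eq (h : a ^ n = y * a ^ (n + 1)) (k : ℕ) : y ^ k * a ^ (n + k) = a ^ n := by
  induction k with
  | zero => simp
  | succ k ih =>
    rw [pow_succ, mul_assoc, ← add_assoc, ← pow_eq_mul_pow_succ_of_le h (n.le_add_right k), ih]

theorem semiconjBy_pow_of_pow_eq (hx : a ^ n = a ^ (n + 1) * x) (hy : a ^ n = y * a ^ (n + 1)) :
    SemiconjBy (a ^ n) x y := by
  calc a ^ n * x = y * (a ^ (n + 1) * x) := by rw [← mul_assoc, ← hy]
    _ = y * a ^ n := by rw [← hx]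

theorem pow_eq_pow_mul_pow_succ_mul_pow_succ (hx : a ^ n = a ^ (n + 1) * x)
    (hy : a ^ n = y * a ^ (n + 1)) : a ^ n = a ^ n * x ^ (n + 1) * a ^ (n + 1) := by
  rw [(semiconjBy_pow_of_pow_eq hx hy).pow_right (n + 1), mul_assoc, ← pow_add,
    pow_mul_pow_add_eq hy]

theorem pow_eq_mul_pow_succ_of_pow_eq_pow_succ_mul (hx : a ^ n = a ^ (n + 1) * x) (hN : n ≤ N)
    (hz : a ^ N = z * a ^ (N + 1)) : a ^ n = z * a ^ (n + 1) := by
  obtain ⟨k, rfl⟩ := Nat.exists_eq_add_of_le hN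
  calc a ^ n = z * a ^ (n + k + 1) * x ^ k := by rw [← hz, pow_add_mul_pow_eq hx]
    _ = z * a * (a ^ (n + k) * x ^ k) := by rw [pow_succ', mul_assoc, mul_assoc, mul_assoc]
    _ = z * a ^ (n + 1) := by rw [pow_add_mul_pow_eq hx, mul_assoc, ← pow_succ']

end Monoid

theorem stmt_1_general {R : Type*} [Ring R] (S : NonUnitalSubring R) (a x : R)
    (ha : a ∈ S) (hx : x ∈ S) (n : ℕ)
    (h : a ^ n = a ^ (n + 1) * x)
    (hleft : ∃ (m : ℕ) (y : R), 0 < m ∧ a ^ m = y * a ^ (m + 1)) :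
    ∃ y ∈ S, a ^ n = y * a ^ (n + 1) := by
  obtain ⟨m, y, hm, hy⟩ := hleft
  have hxN := pow_eq_pow_succ_mul_of_le h (n.le_add_right m)
  have hyN := pow_eq_mul_pow_succ_of_le hy (m.le_add_left n)
  refine ⟨a ^ (n + m) * x ^ (n + m + 1),
    mul_mem (pow_mem_of_pos ha (by omega)) (pow_mem_of_pos hx (by omega)), ?_⟩
  exact pow_eq_mul_pow_succ_of_pow_eq_pow_succ_mul h (n.le_add_right m)
    (pow_eq_pow_mul_pow_succ_mul_pow_succ hxN hyN)

/-- If `S` is a (not necessarily unital) subring of `R`, `a ∈ S` with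
`a^n = a^(n+1) * x` for some `x ∈ S`, and `a` is strongly π-regular in `R`,
then there exists `y ∈ S` with `a^n = y * a^(n+1)`. -/
theorem stmt_1 {R : Type*} [Ring R] (S : NonUnitalSubring R) (a x : R)
    (ha : a ∈ S) (hx : x ∈ S) (n : ℕ) (hn : 0 < n)
    (h : a ^ n = a ^ (n + 1) * x)
    (hleft : ∃ (m : ℕ) (y : R), 0 < m ∧ a ^ m = y * a ^ (m + 1)) :
    ∃ y ∈ S, a ^ n = y * a ^ (n + 1) :=
  stmt_1_general S a x ha hx n h hleft
end

section
/- If Dischinger's result holds locally in a ring R (i.e., every right strongly π-regular element of R is strongly π-regular), then it also holds in the corner ring eRe for every idempotent e ∈ R. -/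
/-! A left witness `y` for `a` in `R` can be replaced by its compression `e * y * e`:
since `e * a = a`, every positive power of `a` lies in `e R`, so
`a ^ m = e * a ^ m = e * y * a ^ (m + 1) = e * y * e * a ^ (m + 1)`. -/

namespace IsIdempotentElem

variable {S : Type*} [Semigroup S] {e : S}

theorem mul_eq_self_of_eq_mul_mul (he : IsIdempotentElem e) {a : S} (ha : a = e * a * e) :
    e * a = a := by
  rw [ha, ← mul_assoc, ← mul_assoc, he.eq]

theorem mul_corner_mul (he : IsIdempotentElem e) (y : S) :
    e * (e * y * e) * e = e * y * e := by
  rw [← mul_assoc, ← mul_assoc, he.eq, he.mul_mul_self]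

end IsIdempotentElem

theorem eq_mul_mul_mul_of_eq_mul {S : Type*} [Semigroup S] {e b c y : S} (hb : e * b = b)
    (hc : e * c = c) (h : b = y * c) : b = e * y * e * c :=
  calc b = e * (y * c) := by rw [← h, hb]
    _ = e * y * e * c := by rw [mul_assoc (e * y), hc, mul_assoc]

theorem mul_pow_eq_pow_of_mul_eq {M : Type*} [Monoid M] {e a : M} (h : e * a = a) {k : ℕ}
    (hk : 0 < k) : e * a ^ k = a ^ k := by
  obtain ⟨j, rfl⟩ := Nat.exists_eq_add_of_lt hk
  rw [pow_succ', ← mul_assoc, h]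

/-- If every right strongly π-regular element of `R` is strongly π-regular,
then the same holds in the corner ring `eRe` for every idempotent `e`. -/
theorem stmt_2 {R : Type*} [Ring R] (e : R) (he : IsIdempotentElem e)
    (hR : ∀ a : R, (∃ (n : ℕ) (x : R), 0 < n ∧ a ^ n = a ^ (n + 1) * x) →
      ∃ (m : ℕ) (y : R), 0 < m ∧ a ^ m = y * a ^ (m + 1))
    (a : R) (ha : a = e * a * e)
    (hright : ∃ (n : ℕ) (x : R), 0 < n ∧ x = e * x * e ∧ a ^ n = a ^ (n + 1) * x) :
    ∃ (m : ℕ) (y : R), 0 < m ∧ y = e * y * e ∧ a ^ m = y * a ^ (m + 1) := by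
  obtain ⟨n, x, hn, -, hxn⟩ := hright
  obtain ⟨m, y, hm, hy⟩ := hR a ⟨n, x, hn, hxn⟩
  have hea : e * a = a := he.mul_eq_self_of_eq_mul_mul ha
  exact ⟨m, e * y * e, hm, (he.mul_corner_mul y).symm,
    eq_mul_mul_mul_of_eq_mul (mul_pow_eq_pow_of_mul_eq hea hm)
      (mul_pow_eq_pow_of_mul_eq hea m.succ_pos) hy⟩
end

section
/- Let a ∈ R be such that for every prime ideal P of R, the image of a in R/P is strongly π-regular. Then a is strongly π-regular in R. -/
/-!
Let `S ⊆ R` be nonempty and such that an ideal `P` meets `S` whenever `A * B ⊆ P` for ideals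
`A`, `B` meeting `S`. If every prime ideal meets `S`, then `0 ∈ S`: an ideal `P` maximal (Zorn)
among those missing `S` is prime, since for `I * J ⊆ P` with `I, J ⊄ P` the ideals `P ⊔ I` and
`P ⊔ J` meet `S` while `(P ⊔ I) * (P ⊔ J) ⊆ P`.

The right defects `a ^ n - a ^ (n + 1) * x` (`n > 0`) form such a set: if `e` is one in `A` and
`f = a ^ m - a ^ (m + 1) * z` one in `B`, substituting `a ^ n = a ^ (n + 1) * x + e` repeatedly
gives `a ^ (n + m) - a ^ (n + m + 1) * (z + x ^ (m + 1) * f) = ∑ i ≤ m, a ^ i * (e * x ^ i * f)`,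
which lies in `P`. Left defects follow from the mirror identity, obtained in `Rᵐᵒᵖ`.
-/

namespace TwoSidedIdeal

section NonUnitalNonAssocRing

variable {R : Type*} [NonUnitalNonAssocRing R]

theorem mem_sSup_of_directedOn {c : Set (TwoSidedIdeal R)} (hne : c.Nonempty)
    (hc : DirectedOn (· ≤ ·) c) {x : R} : x ∈ sSup c ↔ ∃ I ∈ c, x ∈ I := by
  refine ⟨fun hx => ?_, fun ⟨I, hI, hx⟩ => le_sSup hI hx⟩
  let U : TwoSidedIdeal R := mk' {r | ∃ I ∈ c, r ∈ I}
    (hne.imp fun I hI => ⟨hI, I.zero_mem⟩)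
    (fun ⟨I, hI, hr⟩ ⟨J, hJ, hs⟩ =>
      let ⟨K, hK, hIK, hJK⟩ := hc I hI J hJ
      ⟨K, hK, K.add_mem (hIK hr) (hJK hs)⟩)
    (fun ⟨I, hI, hr⟩ => ⟨I, hI, I.neg_mem hr⟩)
    (fun ⟨I, hI, hr⟩ => ⟨I, hI, I.mul_mem_left _ _ hr⟩)
    (fun ⟨I, hI, hr⟩ => ⟨I, hI, I.mul_mem_right _ _ hr⟩)
  have hU : sSup c ≤ U := sSup_le fun I hI r hr => (mem_mk' ..).2 ⟨I, hI, hr⟩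
  simpa [U] using hU hx

theorem sup_mul_sup_mem {P I J : TwoSidedIdeal R} (hIJ : ∀ i ∈ I, ∀ j ∈ J, i * j ∈ P) :
    ∀ s ∈ P ⊔ I, ∀ t ∈ P ⊔ J, s * t ∈ P := by
  rintro _ hs _ ht
  obtain ⟨p, hp, i, hi, rfl⟩ := mem_sup.1 hs
  obtain ⟨q, hq, j, hj, rfl⟩ := mem_sup.1 ht
  rw [add_mul, mul_add i]
  exact P.add_mem (P.mul_mem_right _ _ hp) (P.add_mem (P.mul_mem_left _ _ hq) (hIJ i hi j hj))

end NonUnitalNonAssocRing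

variable {R : Type*} [Ring R]

theorem mk'_eq_mk'_iff {P : TwoSidedIdeal R} {r s : R} :
    P.ringCon.mk' r = P.ringCon.mk' s ↔ r - s ∈ P :=
  (RingCon.eq _).trans (P.rel_iff r s)

def IsPrime (P : TwoSidedIdeal R) : Prop :=
  P ≠ ⊤ ∧
    ∀ I J : TwoSidedIdeal R, (∀ i ∈ I, ∀ j ∈ J, i * j ∈ P) → I ≤ P ∨ J ≤ P

theorem zero_mem_of_forall_isPrime {S : Set R} (hS : S.Nonempty)
    (hmul : ∀ P A B : TwoSidedIdeal R, (∀ s ∈ A, ∀ t ∈ B, s * t ∈ P) →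
      (∃ s ∈ S, s ∈ A) → (∃ t ∈ S, t ∈ B) → ∃ u ∈ S, u ∈ P)
    (hprime : ∀ P : TwoSidedIdeal R, P.IsPrime → ∃ s ∈ S, s ∈ P) : (0 : R) ∈ S := by
  by_contra h0
  obtain ⟨P, -, hP⟩ := zorn_le_nonempty₀ {P : TwoSidedIdeal R | ∀ s ∈ S, s ∉ P}
    (fun c hcS hc I hI => ⟨sSup c, fun s hs hsc => by
        obtain ⟨J, hJ, hsJ⟩ := (mem_sSup_of_directedOn ⟨I, hI⟩ hc.directedOn).1 hsc
        exact hcS hJ s hs hsJ,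
      fun _ => le_sSup⟩)
    ⊥ fun s hs hs0 => h0 ((mem_bot _).1 hs0 ▸ hs)
  have hmeets : ∀ I, ¬ I ≤ P → ∃ s ∈ S, s ∈ P ⊔ I := fun I hI => by
    by_contra! h
    exact hI (le_sup_right.trans (hP.le_of_ge h le_sup_left))
  have hPprime : P.IsPrime := by
    refine ⟨fun hPtop => ?_, fun I J hIJ => ?_⟩
    · obtain ⟨s, hs⟩ := hS
      exact hP.prop s hs (hPtop ▸ mem_top _)
    · by_contra! h
      obtain ⟨u, hu, huP⟩ := hmul P _ _ (sup_mul_sup_mem hIJ) (hmeets I h.1) (hmeets J h.2)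
      exact hP.prop u hu huP
  obtain ⟨s, hs, hsP⟩ := hprime P hPprime
  exact hP.prop s hs hsP

end TwoSidedIdeal

section PiRegular

open Finset MulOpposite

variable {R : Type*} [Ring R] {P A B : TwoSidedIdeal R}

theorem pow_sub_pow_add_mul_pow_eq_sum (a x : R) (n k : ℕ) :
    a ^ n - a ^ (n + k) * x ^ k = ∑ i ∈ range k, a ^ i * (a ^ n - a ^ (n + 1) * x) * x ^ i := by
  induction k with
  | zero => simp
  | succ k ih =>
    rw [sum_range_succ, ← ih, mul_sub, sub_mul, ← pow_add, mul_assoc, mul_assoc, ← pow_succ',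
      ← mul_assoc, ← pow_add, add_comm k n, show k + (n + 1) = n + (k + 1) by omega]
    abel

theorem pow_add_sub_pow_add_succ_mul_eq_sum (a x z : R) (n m : ℕ) :
    a ^ (n + m) - a ^ (n + m + 1) * (z + x ^ (m + 1) * (a ^ m - a ^ (m + 1) * z)) =
      ∑ i ∈ range (m + 1),
        a ^ i * ((a ^ n - a ^ (n + 1) * x) * x ^ i * (a ^ m - a ^ (m + 1) * z)) := by
  set f := a ^ m - a ^ (m + 1) * z with hf
  simp only [← mul_assoc]
  rw [← sum_mul, ← pow_sub_pow_add_mul_pow_eq_sum, sub_mul, mul_add, ← sub_sub,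
    ← add_assoc n m 1, mul_assoc]
  congr 1
  rw [hf, mul_sub, ← pow_add, ← mul_assoc, ← pow_add, add_assoc]

theorem pow_add_sub_mul_pow_add_succ_eq_sum (a y w : R) (n m : ℕ) :
    a ^ (n + m) - (y + (a ^ n - y * a ^ (n + 1)) * w ^ (n + 1)) * a ^ (n + m + 1) =
      ∑ i ∈ range (n + 1),
        (a ^ n - y * a ^ (n + 1)) * w ^ i * (a ^ m - w * a ^ (m + 1)) * a ^ i := by
  apply op_injective
  simpa [op_sum, add_comm m n, mul_assoc] using
    pow_add_sub_pow_add_succ_mul_eq_sum (op a) (op w) (op y) m n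

theorem TwoSidedIdeal.pow_add_sub_pow_add_succ_mul_mem (hAB : ∀ s ∈ A, ∀ t ∈ B, s * t ∈ P)
    {a x z : R} {n m : ℕ} (hx : a ^ n - a ^ (n + 1) * x ∈ A)
    (hz : a ^ m - a ^ (m + 1) * z ∈ B) :
    a ^ (n + m) - a ^ (n + m + 1) * (z + x ^ (m + 1) * (a ^ m - a ^ (m + 1) * z)) ∈ P := by
  rw [pow_add_sub_pow_add_succ_mul_eq_sum]
  exact finsetSum_mem _ _ _ fun i _ => P.mul_mem_left _ _ (hAB _ (A.mul_mem_right _ _ hx) _ hz)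

theorem TwoSidedIdeal.pow_add_sub_mul_pow_add_succ_mem (hAB : ∀ s ∈ A, ∀ t ∈ B, s * t ∈ P)
    {a y w : R} {n m : ℕ} (hy : a ^ n - y * a ^ (n + 1) ∈ A)
    (hw : a ^ m - w * a ^ (m + 1) ∈ B) :
    a ^ (n + m) - (y + (a ^ n - y * a ^ (n + 1)) * w ^ (n + 1)) * a ^ (n + m + 1) ∈ P := by
  rw [pow_add_sub_mul_pow_add_succ_eq_sum]
  exact finsetSum_mem _ _ _ fun i _ => P.mul_mem_right _ _ (hAB _ (A.mul_mem_right _ _ hy) _ hw)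

theorem exists_pow_eq_pow_succ_mul_of_forall_isPrime (a : R)
    (h : ∀ P : TwoSidedIdeal R, P.IsPrime → ∃ n x, 0 < n ∧ a ^ n - a ^ (n + 1) * x ∈ P) :
    ∃ n x, 0 < n ∧ a ^ n = a ^ (n + 1) * x := by
  obtain ⟨n, x, hn, hx⟩ := TwoSidedIdeal.zero_mem_of_forall_isPrime
    (S := {e | ∃ n x, 0 < n ∧ a ^ n - a ^ (n + 1) * x = e}) ⟨a, 1, 0, one_pos, by simp⟩
    (by
      rintro P A B hAB ⟨_, ⟨n, x, hn, rfl⟩, hx⟩ ⟨_, ⟨m, z, -, rfl⟩, hz⟩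
      exact ⟨_, ⟨n + m, _, by omega, rfl⟩,
        TwoSidedIdeal.pow_add_sub_pow_add_succ_mul_mem hAB hx hz⟩)
    fun P hP => let ⟨n, x, hn, hx⟩ := h P hP; ⟨_, ⟨n, x, hn, rfl⟩, hx⟩
  exact ⟨n, x, hn, sub_eq_zero.1 hx⟩

theorem exists_pow_eq_mul_pow_succ_of_forall_isPrime (a : R)
    (h : ∀ P : TwoSidedIdeal R, P.IsPrime → ∃ n y, 0 < n ∧ a ^ n - y * a ^ (n + 1) ∈ P) :
    ∃ n y, 0 < n ∧ a ^ n = y * a ^ (n + 1) := by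
  obtain ⟨n, y, hn, hy⟩ := TwoSidedIdeal.zero_mem_of_forall_isPrime
    (S := {e | ∃ n y, 0 < n ∧ a ^ n - y * a ^ (n + 1) = e}) ⟨a, 1, 0, one_pos, by simp⟩
    (by
      rintro P A B hAB ⟨_, ⟨n, y, hn, rfl⟩, hy⟩ ⟨_, ⟨m, w, -, rfl⟩, hw⟩
      exact ⟨_, ⟨n + m, _, by omega, rfl⟩,
        TwoSidedIdeal.pow_add_sub_mul_pow_add_succ_mem hAB hy hw⟩)
    fun P hP => let ⟨n, y, hn, hy⟩ := h P hP; ⟨_, ⟨n, y, hn, rfl⟩, hy⟩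
  exact ⟨n, y, hn, sub_eq_zero.1 hy⟩

end PiRegular

/-- Fisher–Snider (element-wise): if the image of `a` is strongly π-regular in
`R/P` for every prime two-sided ideal `P` of `R`, then `a` is strongly π-regular. -/
theorem stmt_3 {R : Type*} [Ring R] (a : R)
    (h : ∀ P : TwoSidedIdeal R, P ≠ ⊤ →
      (∀ I J : TwoSidedIdeal R, (∀ i ∈ I, ∀ j ∈ J, i * j ∈ P) → I ≤ P ∨ J ≤ P) →
      ∃ (n m : ℕ) (x y : P.ringCon.Quotient), 0 < n ∧ 0 < m ∧
        (RingCon.mk' P.ringCon a) ^ n = (RingCon.mk' P.ringCon a) ^ (n + 1) * x ∧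
        (RingCon.mk' P.ringCon a) ^ m = y * (RingCon.mk' P.ringCon a) ^ (m + 1)) :
    ∃ (n m : ℕ) (x y : R), 0 < n ∧ 0 < m ∧
      a ^ n = a ^ (n + 1) * x ∧ a ^ m = y * a ^ (m + 1) := by
  have hprime : ∀ P : TwoSidedIdeal R, P.IsPrime →
      (∃ n x, 0 < n ∧ a ^ n - a ^ (n + 1) * x ∈ P) ∧
        ∃ m y, 0 < m ∧ a ^ m - y * a ^ (m + 1) ∈ P := by
    rintro P ⟨hne, hP⟩
    obtain ⟨n, m, x, y, hn, hm, hx, hy⟩ := h P hne hP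
    obtain ⟨x, rfl⟩ := P.ringCon.mk'_surjective x
    obtain ⟨y, rfl⟩ := P.ringCon.mk'_surjective y
    simp only [← map_pow, ← map_mul, TwoSidedIdeal.mk'_eq_mk'_iff] at hx hy
    exact ⟨⟨n, x, hn, hx⟩, m, y, hm, hy⟩
  obtain ⟨n, x, hn, hx⟩ :=
    exists_pow_eq_pow_succ_mul_of_forall_isPrime a fun P hP => (hprime P hP).1
  obtain ⟨m, y, hm, hy⟩ :=
    exists_pow_eq_mul_pow_succ_of_forall_isPrime a fun P hP => (hprime P hP).2
  exact ⟨n, m, x, y, hn, hm, hx, hy⟩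
end

section
/- (Azumaya) If a ∈ R satisfies aⁿ = aⁿ⁺¹x and aᵐ = yaᵐ⁺¹ for some x, y ∈ R and positive integers n, m, then aᵐ = aᵐ⁺¹x and aⁿ = yaⁿ⁺¹. -/
/-!
Iterating `a ^ m = y * a ^ (m + 1)` gives `a ^ m = y ^ n * a ^ (m + n)`, and in
`a ^ (m + n) = a ^ m * a ^ n` the factor `a ^ n` may be replaced by `a ^ n * a * x`;
undoing the iteration leaves `a ^ m = a ^ m * a * x`. The other half is the same
argument in the opposite monoid.
-/

section Monoid

variable {M : Type*} [Monoid M]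

theorem pow_eq_pow_mul_pow_add_of_pow_eq_mul_pow_succ {a y : M} {m : ℕ}
    (hl : a ^ m = y * a ^ (m + 1)) (k : ℕ) : a ^ m = y ^ k * a ^ (m + k) := by
  induction k with
  | zero => simp
  | succ k ih =>
    have hstep : a ^ (m + k) = y * a ^ (m + k + 1) := by
      rw [pow_add, hl, mul_assoc, ← pow_add, Nat.add_right_comm]
    rw [ih, hstep, ← mul_assoc, ← pow_succ, Nat.add_assoc]

theorem pow_eq_pow_succ_mul_of_pow_eq_mul_pow_succ {a x y : M} {n m : ℕ}
    (hr : a ^ n = a ^ (n + 1) * x) (hl : a ^ m = y * a ^ (m + 1)) :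
    a ^ m = a ^ (m + 1) * x := by
  have hiter := pow_eq_pow_mul_pow_add_of_pow_eq_mul_pow_succ hl n
  calc a ^ m = y ^ n * (a ^ m * a ^ n) := by rw [← pow_add, ← hiter]
    _ = y ^ n * (a ^ m * a ^ n) * a * x := by
        conv_lhs => rw [hr]
        simp only [pow_succ, mul_assoc]
    _ = a ^ (m + 1) * x := by rw [← pow_add, ← hiter, pow_succ]

theorem pow_eq_mul_pow_succ_of_pow_eq_pow_succ_mul_s7 {a x y : M} {n m : ℕ}
    (hr : a ^ n = a ^ (n + 1) * x) (hl : a ^ m = y * a ^ (m + 1)) :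
    a ^ n = y * a ^ (n + 1) := by
  open MulOpposite in
  have hr' : op a ^ m = op a ^ (m + 1) * op y := by
    simpa only [← op_pow, ← op_mul] using congrArg op hl
  have hl' : op a ^ n = op x * op a ^ (n + 1) := by
    simpa only [← op_pow, ← op_mul] using congrArg op hr
  simpa only [← op_pow, ← op_mul, op_inj]
    using pow_eq_pow_succ_mul_of_pow_eq_mul_pow_succ hr' hl'

end Monoid

theorem stmt_7_general {R : Type*} [Ring R] (a x y : R) (n m : ℕ)
    (hr : a ^ n = a ^ (n + 1) * x) (hl : a ^ m = y * a ^ (m + 1)) :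
    a ^ m = a ^ (m + 1) * x ∧ a ^ n = y * a ^ (n + 1) :=
  ⟨pow_eq_pow_succ_mul_of_pow_eq_mul_pow_succ hr hl,
    pow_eq_mul_pow_succ_of_pow_eq_pow_succ_mul_s7 hr hl⟩

/-- Azumaya's lemma: if `a^n = a^(n+1) * x` and `a^m = y * a^(m+1)`,
then `a^m = a^(m+1) * x` and `a^n = y * a^(n+1)`. -/
theorem stmt_7 {R : Type*} [Ring R] (a x y : R) (n m : ℕ) (hn : 0 < n) (hm : 0 < m)
    (hr : a ^ n = a ^ (n + 1) * x) (hl : a ^ m = y * a ^ (m + 1)) :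
    a ^ m = a ^ (m + 1) * x ∧ a ^ n = y * a ^ (n + 1) :=
  stmt_7_general a x y n m hr hl
end

section
/- Let S be a commutative ring, A ∈ Mₘ(S), and suppose Aⁿ = Aⁿ⁺¹B for some positive integer n and B ∈ Mₘ(S). Then there exists Y ∈ Mₘ(S) with Aⁿ = YAⁿ⁺¹. -/
/-!
Let `N` be the column space of `Aⁿ`. The hypothesis says `N ⊆ A N`, so making `A` act as `X`
turns `N` into a finitely generated `S[X]`-module with `N = (X) N`. Nakayama's lemma gives
`r ≡ 1 (mod X)` annihilating `N`; writing `r = 1 - q X`, the matrix `Y = q(A)` satisfies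
`Y A (Aⁿ v) = Aⁿ v` for every `v`.
-/

open Polynomial Matrix

theorem Module.End.exists_aeval_apply_eq_self_of_le_map {R M : Type*} [CommRing R]
    [AddCommGroup M] [Module R M] (f : Module.End R M) {N : Submodule R M} (hN : N.FG)
    (hle : N ≤ N.map f) : ∃ p : R[X], ∀ x ∈ N, aeval f p (f x) = x := by
  obtain ⟨s, -, rfl⟩ := hN
  set N' : Submodule R[X] (AEval' f) := Submodule.span R[X] (AEval'.of f '' s)
  have of_mem : ∀ x ∈ Submodule.span R s, AEval'.of f x ∈ N' := fun x hx =>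
    Submodule.span_le_restrictScalars R R[X] _
      (Submodule.apply_mem_span_image_of_mem_span (AEval'.of f).toLinearMap hx)
  have hN' : N' ≤ Ideal.span {(X : R[X])} • N' := by
    rw [Submodule.span_le]
    rintro _ ⟨y, hy, rfl⟩
    obtain ⟨z, hz, rfl⟩ := hle (Submodule.subset_span hy)
    rw [← AEval'.X_smul_of]
    exact Submodule.smul_mem_smul (Ideal.mem_span_singleton_self X) (of_mem z hz)
  obtain ⟨r, hr, hrN⟩ := Submodule.exists_sub_one_mem_and_smul_eq_zero_of_fg_of_le_smul _ N'
    (Submodule.fg_span (s.finite_toSet.image _)) hN'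
  obtain ⟨q, hq⟩ := Ideal.mem_span_singleton'.1 hr
  refine ⟨-q, fun x hx => ?_⟩
  have hx' := hrN _ (of_mem x hx)
  rw [← sub_add_cancel r 1, ← hq, add_smul, one_smul, mul_smul, AEval'.X_smul_of,
    ← AEval.of_aeval_smul, ← map_add, LinearEquiv.map_eq_zero_iff] at hx'
  rw [map_neg, LinearMap.neg_apply]
  exact neg_eq_of_add_eq_zero_right hx'

theorem stmt_10_general {S : Type*} [CommRing S] {m : ℕ}
    (A B : Matrix (Fin m) (Fin m) S) (n : ℕ)
    (h : A ^ n = A ^ (n + 1) * B) :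
    ∃ Y : Matrix (Fin m) (Fin m) S, A ^ n = Y * A ^ (n + 1) := by
  set N := LinearMap.range (mulVecLin (A ^ n))
  have hle : N ≤ N.map (toLinAlgEquiv' A) := by
    rintro _ ⟨v, rfl⟩
    refine ⟨A ^ n *ᵥ (B *ᵥ v), ⟨B *ᵥ v, rfl⟩, ?_⟩
    rw [toLinAlgEquiv'_apply, mulVec_mulVec, mulVec_mulVec, ← pow_succ', ← h, mulVecLin_apply]
  obtain ⟨p, hp⟩ := Module.End.exists_aeval_apply_eq_self_of_le_map
    (toLinAlgEquiv' A) (Submodule.fg_range _) hle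
  refine ⟨aeval A p, toLin'.injective (LinearMap.ext fun v => ?_)⟩
  have hv := hp _ ⟨v, rfl⟩
  rw [aeval_algHom_apply] at hv
  simp only [toLinAlgEquiv'_apply, mulVecLin_apply, mulVec_mulVec] at hv
  rw [toLin'_apply, toLin'_apply, ← hv, pow_succ']

/-- Călugăreanu–Pop conjecture (generalized): over a commutative ring `S`,
if `A^n = A^(n+1) * B` for matrices, then `A^n = Y * A^(n+1)` for some `Y`. -/
theorem stmt_10 {S : Type*} [CommRing S] {m : ℕ}
    (A B : Matrix (Fin m) (Fin m) S) (n : ℕ) (hn : 0 < n)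
    (h : A ^ n = A ^ (n + 1) * B) :
    ∃ Y : Matrix (Fin m) (Fin m) S, A ^ n = Y * A ^ (n + 1) :=
  stmt_10_general A B n h
end

section
/- Let S be a commutative ring and A ∈ Mₘ(S). If A satisfies a polynomial f(x) ∈ Mₘ(S)[x] (with matrix coefficients), then A satisfies det(f(x))·I, where f(x) is viewed as an element of Mₘ(S[x]) and det(f(x)) ∈ S[x]. -/
open Polynomial

lemma eval_mul_eq_zero_of_right {R : Type*} [Ring R] (a : R) (q : R[X])
    (hq : q.eval a = 0) (p : R[X]) : (p * q).eval a = 0 := by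
  have key : ∀ (n : ℕ) (c : R) (q : R[X]),
      (monomial n c * q).eval a = c * q.eval a * a ^ n := by
    intro n c q
    induction q using Polynomial.induction_on' with
    | add f g hf hg => rw [mul_add, eval_add, hf, hg, eval_add, mul_add, add_mul]
    | monomial j d =>
      rw [monomial_mul_monomial, eval_monomial, eval_monomial, add_comm n j, pow_add,
        ← mul_assoc, mul_assoc c d]
  induction p using Polynomial.induction_on' with
  | add f g hf hg => rw [add_mul, eval_add, hf, hg, add_zero]
  | monomial n c => rw [key, hq, mul_zero, zero_mul]

/-- If a matrix `A` over a commutative ring satisfies a polynomial `f` with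
matrix coefficients, then it satisfies the scalar polynomial `det f`
(where `f` is viewed in `Mₘ(S[x])`). -/
theorem stmt_11 {S : Type*} [CommRing S] {m : ℕ}
    (A : Matrix (Fin m) (Fin m) S) (f : Polynomial (Matrix (Fin m) (Fin m) S))
    (hf : f.eval A = 0) :
    Polynomial.aeval A (Matrix.det (matPolyEquiv.symm f)) = 0 := by
  have h : (matPolyEquiv.symm f).det • (1 : Matrix (Fin m) (Fin m) S[X]) =
      (matPolyEquiv.symm f).adjugate * matPolyEquiv.symm f :=
    (Matrix.adjugate_mul _).symm
  apply_fun matPolyEquiv at h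
  rw [_root_.map_mul, AlgEquiv.apply_symm_apply, matPolyEquiv_smul_one] at h
  apply_fun (fun p => p.eval A) at h
  rw [eval_mul_eq_zero_of_right A f hf, eval_map] at h
  exact h
end

section
/- Every commutative ring embeds in a commutative clean ring. -/
/-!
A ring embeds in the product of its localizations at its maximal ideals. A local ring is
clean, since for each `r` either `r` or `r - 1` is a unit, and cleanness is preserved by
arbitrary products, componentwise.
-/

def IsCleanRing (R : Type*) [Ring R] : Prop :=
  ∀ r : R, ∃ u e : R, IsUnit u ∧ IsIdempotentElem e ∧ r = u + e

theorem IsLocalRing.isCleanRing (R : Type*) [Ring R] [IsLocalRing R] : IsCleanRing R := by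
  intro r
  rcases IsLocalRing.isUnit_or_isUnit_of_add_one (add_sub_cancel r 1) with hr | hr
  · exact ⟨r, 0, hr, .zero, (add_zero r).symm⟩
  · refine ⟨r - 1, 1, ?_, .one, (sub_add_cancel r 1).symm⟩
    simpa using hr.neg

theorem IsCleanRing.pi {ι : Type*} {R : ι → Type*} [∀ i, Ring (R i)]
    (h : ∀ i, IsCleanRing (R i)) : IsCleanRing (∀ i, R i) := by
  intro r
  choose u e hu he hr using fun i => h i (r i)
  exact ⟨u, e, Pi.isUnit_iff.2 hu, funext he, funext hr⟩

/-- Burgess–Raphael: every commutative ring embeds in a commutative clean ring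
(every element is the sum of a unit and an idempotent). -/
theorem stmt_13 (R : Type u) [CommRing R] :
    ∃ (T : Type u) (_ : CommRing T),
      (∀ t : T, ∃ u e : T, IsUnit u ∧ IsIdempotentElem e ∧ t = u + e) ∧
      ∃ f : R →+* T, Function.Injective f :=
  ⟨MaximalSpectrum.PiLocalization R, inferInstance,
    IsCleanRing.pi fun _ => IsLocalRing.isCleanRing _,
    (MaximalSpectrum.toPiLocalization R).toRingHom, MaximalSpectrum.toPiLocalization_injective R⟩
end

section
/- In a Dedekind-finite exchange ring, every right strongly π-regular element is strongly π-regular. -/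
/-!
With `b = aⁿ` and `c = xⁿ`, iterating `aⁿ = aⁿ⁺¹x` gives `b = b²c`, so `b` is right
π-regular of index one and it suffices to show `b ∈ Rb²`. Apply the exchange property to
`bc`: it yields an idempotent `e = bcr` with `1 - e ∈ (1 - bc)R`, and since `b(1 - bc) = 0`
we get `be = b`. For `d = ecr` one has `bd = e` and `ed = d`, so
`(b + (1 - e))(d + (1 - e)) = 1`. Dedekind-finiteness reverses this product, and cutting the
reversed identity down by `e` and `1 - e` gives `db = e` and `eb = b`, whence `b = db²`.
-/

theorem pow_eq_pow_add_mul_pow {M : Type*} [Monoid M] {a x : M} {n : ℕ}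
    (h : a ^ n = a ^ (n + 1) * x) (k : ℕ) : a ^ n = a ^ (n + k) * x ^ k := by
  induction k with
  | zero => simp
  | succ k ih =>
    calc a ^ n = a ^ k * a ^ n * x ^ k := by rw [← pow_add, add_comm k, ← ih]
      _ = a ^ (n + (k + 1)) * x ^ (k + 1) := by
        rw [h, ← mul_assoc, ← pow_add, mul_assoc, ← pow_succ']
        ring_nf

section Ring

variable {R : Type*} [Ring R]

theorem eq_mul_mul_self_of_isIdempotentElem [IsDedekindFiniteMonoid R] {b d f : R}
    (hf : IsIdempotentElem f) (hbf : b * f = b) (hbd : b * d = f) (hfd : f * d = d) :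
    b = d * (b * b) := by
  set u := b + (1 - f)
  set v := d + (1 - f)
  have huf : u * f = b := by
    simp only [u, add_mul, sub_mul, one_mul, hbf, hf.eq, sub_self, add_zero]
  have hfv : f * v = d := by
    simp only [v, mul_add, mul_sub, mul_one, hfd, hf.eq, sub_self, add_zero]
  have hcompl_v : (1 - f) * v = 1 - f := by
    rw [sub_mul, one_mul, hfv, add_sub_cancel_left]
  have hvu : v * u = 1 := by
    refine mul_eq_one_symm ?_
    calc u * v = b * d + b * (1 - f) + ((1 - f) * d + (1 - f) * (1 - f)) := by
          simp only [u, v]; noncomm_ring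
      _ = 1 := by
        rw [hbd, mul_sub, mul_one, hbf, sub_mul, one_mul, hfd, hf.one_sub.eq]
        abel
  have hdb : d * b = f := by
    rw [← hfv, ← huf, mul_assoc, ← mul_assoc v, hvu, one_mul, hf.eq]
  have hfb : f * b = b := by
    have h : (1 - f) * b = 0 := by
      rw [← huf, ← hcompl_v, ← mul_assoc, mul_assoc _ v, hvu, mul_one, sub_mul, one_mul, hf.eq,
        sub_self]
    rwa [sub_mul, one_mul, sub_eq_zero, eq_comm] at h
  rw [← mul_assoc, hdb, hfb]

theorem eq_mul_mul_self_of_exchange [IsDedekindFiniteMonoid R] {b c e r s : R}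
    (hb : b = b * b * c) (he : IsIdempotentElem e) (her : e = b * c * r)
    (hes : 1 - e = (1 - b * c) * s) : b = e * c * r * (b * b) := by
  have hbe : b * e = b := by
    have h : b * (1 - e) = 0 := by
      rw [hes, ← mul_assoc, mul_sub, mul_one, ← mul_assoc, ← hb, sub_self, zero_mul]
    rwa [mul_sub, mul_one, sub_eq_zero, eq_comm] at h
  refine eq_mul_mul_self_of_isIdempotentElem he hbe ?_ ?_
  · rw [← mul_assoc, ← mul_assoc, hbe, ← her]
  · rw [← mul_assoc, ← mul_assoc, he.eq]

end Ring

/-- Dittmer et al.: in a Dedekind-finite exchange ring, every right strongly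
π-regular element is strongly π-regular. -/
theorem stmt_14 {R : Type*} [Ring R]
    (hdf : ∀ a b : R, a * b = 1 → b * a = 1)
    (hex : ∀ a : R, ∃ e : R, IsIdempotentElem e ∧ (∃ r : R, e = a * r) ∧
      ∃ s : R, 1 - e = (1 - a) * s)
    (a : R) (ha : ∃ (n : ℕ) (x : R), 0 < n ∧ a ^ n = a ^ (n + 1) * x) :
    ∃ (k : ℕ) (x y : R), 0 < k ∧ a ^ k = a ^ (k + 1) * x ∧ a ^ k = y * a ^ (k + 1) := by
  have : IsDedekindFiniteMonoid R := ⟨hdf _ _⟩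
  obtain ⟨n, x, hn, hx⟩ := ha
  obtain ⟨e, he, ⟨r, her⟩, s, hes⟩ := hex (a ^ n * x ^ n)
  have hb : a ^ n = a ^ n * a ^ n * x ^ n := by rw [← pow_add]; exact pow_eq_pow_add_mul_pow hx n
  refine ⟨n, x, e * x ^ n * r * a ^ (n - 1), hn, hx, ?_⟩
  calc a ^ n = e * x ^ n * r * (a ^ n * a ^ n) :=
        eq_mul_mul_self_of_exchange hb he (by rw [her, mul_assoc]) hes
    _ = e * x ^ n * r * a ^ (n - 1) * a ^ (n + 1) := by
        rw [mul_assoc _ (a ^ (n - 1)), ← pow_add, ← pow_add]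
        congr 2
        omega
end

section
/- A matrix ring Mₘ(T) over a Dedekind-finite ring need not be Dedekind-finite; concretely, in Shepherdson's ring R = ℚ⟨a,b,c,d,w,x,y,z⟩/⟨aw+by−1, ax+bz, cw+dy, cx+dz−1⟩, the matrices A = [[a,b],[c,d]] and B = [[w,x],[y,z]] satisfy AB = I but BA ≠ I in M₂(R). -/
/-- The generators of Shepherdson's example: the free `ℚ`-algebra on eight
noncommuting indeterminates `a, b, c, d, w, x, y, z` (indexed `0, …, 7`). -/
noncomputable def shepGen (i : Fin 8) : FreeAlgebra ℚ (Fin 8) := FreeAlgebra.ι ℚ i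

/-- The four defining relations `aw+by = 1`, `ax+bz = 0`, `cw+dy = 0`,
`cx+dz = 1` of Shepherdson's ring. -/
inductive ShepRel : FreeAlgebra ℚ (Fin 8) → FreeAlgebra ℚ (Fin 8) → Prop
  | r1 : ShepRel (shepGen 0 * shepGen 4 + shepGen 1 * shepGen 6) 1
  | r2 : ShepRel (shepGen 0 * shepGen 5 + shepGen 1 * shepGen 7) 0
  | r3 : ShepRel (shepGen 2 * shepGen 4 + shepGen 3 * shepGen 6) 0
  | r4 : ShepRel (shepGen 2 * shepGen 5 + shepGen 3 * shepGen 7) 1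

/-- Shepherdson's ring `R = ℚ⟨a,b,c,d,w,x,y,z⟩ / ⟨aw+by−1, ax+bz, cw+dy, cx+dz−1⟩`. -/
noncomputable abbrev ShepRing : Type := RingQuot ShepRel

/-- The image of the `i`-th indeterminate in Shepherdson's ring. -/
noncomputable def shep (i : Fin 8) : ShepRing :=
  RingQuot.mkRingHom ShepRel (shepGen i)


noncomputable def sOp : Module.End ℚ (ℕ →₀ ℚ) :=
  Finsupp.lsum ℚ fun n => Finsupp.lsingle (n+1)

noncomputable def tOp : Module.End ℚ (ℕ →₀ ℚ) :=
  Finsupp.lsum ℚ fun n => if n = 0 then 0 else Finsupp.lsingle (n-1)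

lemma ts_eq : tOp * sOp = 1 := by
  apply Finsupp.lhom_ext
  intro n q
  simp [tOp, sOp, Module.End.mul_apply]

lemma st_ne : sOp * tOp ≠ 1 := by
  intro h
  have := congrArg (fun f : Module.End ℚ (ℕ →₀ ℚ) => (f (Finsupp.single 0 1)) 0) h
  simp [sOp, tOp, Module.End.mul_apply] at this

noncomputable def shepModel : Fin 8 → Module.End ℚ (ℕ →₀ ℚ) :=
  ![tOp, 0, 0, 1, sOp, 0, 0, 1]

lemma shepModel_0 : shepModel 0 = tOp := rfl
lemma shepModel_1 : shepModel 1 = 0 := rfl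
lemma shepModel_2 : shepModel 2 = 0 := rfl
lemma shepModel_3 : shepModel 3 = 1 := rfl
lemma shepModel_4 : shepModel 4 = sOp := rfl
lemma shepModel_5 : shepModel 5 = 0 := rfl
lemma shepModel_6 : shepModel 6 = 0 := rfl
lemma shepModel_7 : shepModel 7 = 1 := rfl

noncomputable def shepHom : ShepRing →ₐ[ℚ] Module.End ℚ (ℕ →₀ ℚ) :=
  RingQuot.liftAlgHom ℚ ⟨FreeAlgebra.lift ℚ shepModel, by
    rintro x y (h | h | h | h) <;>
      simp [shepGen, ts_eq, shepModel_0, shepModel_1, shepModel_2, shepModel_3, shepModel_4, shepModel_5, shepModel_6, shepModel_7]⟩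

lemma shepHom_shep (i : Fin 8) : shepHom (shep i) = shepModel i := by
  rw [shep, ← RingQuot.mkAlgHom_coe ℚ]
  rw [show ((RingQuot.mkAlgHom ℚ ShepRel : FreeAlgebra ℚ (Fin 8) →ₐ[ℚ] ShepRing) :
    FreeAlgebra ℚ (Fin 8) →+* ShepRing) (shepGen i)
    = RingQuot.mkAlgHom ℚ ShepRel (shepGen i) from rfl]
  rw [shepHom, RingQuot.liftAlgHom_mkAlgHom_apply]
  simp [shepGen]

lemma shep_rel (h : ShepRel x y) :
    RingQuot.mkRingHom ShepRel x = RingQuot.mkRingHom ShepRel y :=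
  RingQuot.mkRingHom_rel h


/-- Shepherdson's example: in `M₂(R)` over Shepherdson's ring `R`, the matrices
`A = [[a,b],[c,d]]` and `B = [[w,x],[y,z]]` satisfy `AB = 1` but `BA ≠ 1`;
so a matrix ring over a Dedekind-finite ring need not be Dedekind-finite. -/
theorem stmt_15 :
    (!![shep 0, shep 1; shep 2, shep 3] : Matrix (Fin 2) (Fin 2) ShepRing) *
        !![shep 4, shep 5; shep 6, shep 7] = 1 ∧
      (!![shep 4, shep 5; shep 6, shep 7] : Matrix (Fin 2) (Fin 2) ShepRing) *
        !![shep 0, shep 1; shep 2, shep 3] ≠ 1 := by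
  constructor
  · have h1 := shep_rel ShepRel.r1
    have h2 := shep_rel ShepRel.r2
    have h3 := shep_rel ShepRel.r3
    have h4 := shep_rel ShepRel.r4
    simp only [map_add, map_mul, map_one, map_zero] at h1 h2 h3 h4
    ext i j
    fin_cases i <;> fin_cases j <;>
      simp [Matrix.mul_apply, Fin.sum_univ_succ, shep, h1, h2, h3, h4, Matrix.one_apply]
  · intro h
    have h00 := congrFun (congrFun h 0) 0
    simp [Matrix.mul_apply, Fin.sum_univ_succ, Matrix.one_apply] at h00
    have := congrArg shepHom h00
    simp only [map_add, map_mul, map_one, shepHom_shep, shepModel_0, shepModel_2, shepModel_4, shepModel_5] at this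
    apply st_ne
    simpa using this
end
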